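/- arXiv:2101.11328 — 3 statements merged into one kernel-verified Lean document; each statement's English description precedes it below -/
import Mathlib

section
/- (Plotkin construction.) Let r, m be natural numbers and let c : (Fin (m+1) → ZMod 2) → ZMod 2. Define u, v : (Fin m → ZMod 2) → ZMod 2 by u(w) = c(w; 0) and v(w) = c(w; 0) + c(w; 1), where (w; s) denotes the vector in (ZMod 2)^{m+1} whose first m coordinates are w and whose last coordinate is s. Then c is a codeword of RM(r+1, m+1) if and only if u is a codeword of RM(r+1, m) and v is a codeword of RM(r, m). In particular, every codeword of RM(r+1, m+1) is of the form |u|u ⊕ v| with u ∈ RM(r+1, m) and v ∈ RM(r, m). -/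
/-!
Write `f ∈ (ZMod 2)[x₀, …, x_m]` as a polynomial in `x_m` with coefficients `f₀, f₁, …` in the
other variables. Since `deg fᵢ + i ≤ deg f`, the part `g = f₀` has degree `≤ deg f` and
`h = f₁ + f₂ + ⋯` has degree `≤ deg f - 1`; and because `s ^ i = s` for `s ∈ {0, 1}` and `i ≥ 1`,
`f (w; s) = g w + s * h w`. Hence `c (w; 0) = g w` and `c (w; 0) + c (w; 1) = h w`. Conversely
`g + x_m * h` realises `c` as soon as `g` realises `u` and `h` realises `v`, since every function
`φ : ZMod 2 → ZMod 2` satisfies `φ s = φ 0 + s * (φ 0 + φ 1)`.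
-/

def RM (r m : ℕ) : Set ((Fin m → ZMod 2) → ZMod 2) :=
  {c | ∃ f : MvPolynomial (Fin m) (ZMod 2),
    f.totalDegree ≤ r ∧ ∀ v : Fin m → ZMod 2, c v = MvPolynomial.eval v f}

theorem IsIdempotentElem.mul_eval_eq_mul_eval_one {R : Type*} [CommSemiring R] {s : R}
    (hs : IsIdempotentElem s) (p : Polynomial R) : s * p.eval s = s * p.eval 1 := by
  simp only [Polynomial.eval_eq_sum, Polynomial.sum_def, Finset.mul_sum, one_pow, mul_one]
  refine Finset.sum_congr rfl fun e _ => ?_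
  rw [mul_left_comm, ← pow_succ', hs.pow_succ_eq, mul_comm]

namespace MvPolynomial

variable {R : Type*} [CommRing R] {n d : ℕ}

theorem totalDegree_coeff_finSuccEquiv_le_sub (f : MvPolynomial (Fin (n + 1)) R) (i : ℕ) :
    ((finSuccEquiv R n f).coeff i).totalDegree ≤ f.totalDegree - i := by
  by_cases hi : (finSuccEquiv R n f).coeff i = 0
  · simp [hi]
  · have := totalDegree_coeff_finSuccEquiv_add_le f i hi
    omega

theorem exists_eval_cons_eq_add_mul_of_totalDegree_le (f : MvPolynomial (Fin (n + 1)) R)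
    (hf : f.totalDegree ≤ d + 1) :
    ∃ g h : MvPolynomial (Fin n) R, g.totalDegree ≤ d + 1 ∧ h.totalDegree ≤ d ∧
      ∀ (w : Fin n → R) (s : R), IsIdempotentElem s →
        eval (Fin.cons s w) f = eval w g + s * eval w h := by
  set q := finSuccEquiv R n f
  refine ⟨q.coeff 0, q.divX.eval 1, ?_, ?_, fun w s hs => ?_⟩
  · exact (totalDegree_coeff_finSuccEquiv_le_sub f 0).trans (by omega)
  · rw [Polynomial.eval_eq_sum, Polynomial.sum_def]
    refine (totalDegree_finsetSum _ _).trans (Finset.sup_le fun e _ => ?_)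
    rw [one_pow, mul_one, Polynomial.coeff_divX]
    exact (totalDegree_coeff_finSuccEquiv_le_sub f (e + 1)).trans (by omega)
  · calc eval (Fin.cons s w) f = ((Polynomial.X * q.divX + Polynomial.C (q.coeff 0)).map
            (eval w)).eval s := by rw [Polynomial.X_mul_divX_add, eval_eq_eval_mv_eval']
      _ = eval w (q.coeff 0) + s * eval w (q.divX.eval 1) := by
        simp only [Polynomial.map_add, Polynomial.map_mul, Polynomial.map_X, Polynomial.map_C,
          Polynomial.eval_add, Polynomial.eval_mul, Polynomial.eval_X, Polynomial.eval_C]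
        rw [hs.mul_eval_eq_mul_eval_one, Polynomial.eval_map, Polynomial.eval₂_at_one, add_comm]

theorem exists_eval_snoc_eq_add_mul_of_totalDegree_le (f : MvPolynomial (Fin (n + 1)) R)
    (hf : f.totalDegree ≤ d + 1) :
    ∃ g h : MvPolynomial (Fin n) R, g.totalDegree ≤ d + 1 ∧ h.totalDegree ≤ d ∧
      ∀ (w : Fin n → R) (s : R), IsIdempotentElem s →
        eval (Fin.snoc w s) f = eval w g + s * eval w h := by
  obtain ⟨g, h, hg, hh, hgh⟩ := exists_eval_cons_eq_add_mul_of_totalDegree_le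
    (rename (finRotate (n + 1)) f) ((totalDegree_rename_le _ f).trans hf)
  refine ⟨g, h, hg, hh, fun w s hs => ?_⟩
  rw [← hgh w s hs, eval_rename, Fin.snoc_eq_cons_rotate]
  rfl

theorem exists_eval_snoc_eq_add_mul_of_le (g h : MvPolynomial (Fin n) R)
    (hg : g.totalDegree ≤ d + 1) (hh : h.totalDegree ≤ d) :
    ∃ f : MvPolynomial (Fin (n + 1)) R, f.totalDegree ≤ d + 1 ∧
      ∀ (w : Fin n → R) (s : R), eval (Fin.snoc w s) f = eval w g + s * eval w h := by
  refine ⟨rename Fin.castSucc g + X (Fin.last n) * rename Fin.castSucc h, ?_, fun w s => ?_⟩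
  · refine (totalDegree_add _ _).trans (max_le ((totalDegree_rename_le _ g).trans hg) ?_)
    refine (totalDegree_mul _ _).trans ?_
    have hX : (X (Fin.last n) : MvPolynomial (Fin (n + 1)) R).totalDegree ≤ 1 :=
      (totalDegree_monomial_le _ _).trans (by simp)
    have := (totalDegree_rename_le Fin.castSucc h).trans hh
    omega
  · simp [eval_rename, Function.comp_def]

end MvPolynomial

theorem ZMod.two_apply_eq_add_mul (φ : ZMod 2 → ZMod 2) (s : ZMod 2) :
    φ s = φ 0 + s * (φ 0 + φ 1) := by
  revert φ s; decide

theorem ZMod.two_isIdempotentElem (s : ZMod 2) : IsIdempotentElem s := by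
  revert s; unfold IsIdempotentElem; decide

/-- Plotkin construction: `c ∈ RM (r+1) (m+1)` iff `u ∈ RM (r+1) m` and `v ∈ RM r m`,
where `u w = c (w; 0)` and `v w = c (w; 0) + c (w; 1)`. -/
theorem plotkin_construction (r m : ℕ) (c : (Fin (m + 1) → ZMod 2) → ZMod 2) :
    c ∈ RM (r + 1) (m + 1) ↔
      (fun w : Fin m → ZMod 2 => c (Fin.snoc w 0)) ∈ RM (r + 1) m ∧
      (fun w : Fin m → ZMod 2 => c (Fin.snoc w 0) + c (Fin.snoc w 1)) ∈ RM r m := by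
  constructor
  · rintro ⟨f, hf, hc⟩
    obtain ⟨g, h, hg, hh, hgh⟩ := MvPolynomial.exists_eval_snoc_eq_add_mul_of_totalDegree_le f hf
    have hc' (w) (s) : c (Fin.snoc w s) = MvPolynomial.eval w g + s * MvPolynomial.eval w h :=
      (hc _).trans (hgh w s (ZMod.two_isIdempotentElem s))
    refine ⟨⟨g, hg, fun w => ?_⟩, ⟨h, hh, fun w => ?_⟩⟩
    · simp [hc']
    · simp [hc', CharTwo.add_cancel_left]
  · rintro ⟨⟨g, hg, hu⟩, ⟨h, hh, hv⟩⟩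
    obtain ⟨f, hf, hgh⟩ := MvPolynomial.exists_eval_snoc_eq_add_mul_of_le g h hg hh
    refine ⟨f, hf, fun x => ?_⟩
    rw [← Fin.snoc_init_self x, hgh, ← hu, ← hv]
    exact ZMod.two_apply_eq_add_mul (fun s => c (Fin.snoc (Fin.init x) s)) _
end

section
/- For natural numbers r ≤ m, the Reed–Muller code RM(r, m) is a ZMod 2-linear subspace of the space of functions (Fin m → ZMod 2) → ZMod 2, and its dimension (Module.finrank over ZMod 2) equals Σ_{i=0}^{r} C(m, i), the sum of binomial coefficients C(m, i) for 0 ≤ i ≤ r. -/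
open MvPolynomial Finset

lemma zmod2_pow (a : ZMod 2) {k : ℕ} (hk : k ≠ 0) : a ^ k = a := by
  induction k with
  | zero => simp at hk
  | succ n ih =>
    rcases Nat.eq_zero_or_pos n with h | h
    · simp [h]
    · rw [pow_succ, ih (by omega)]
      have := ZMod.pow_card a
      simpa [sq] using this

noncomputable def evLin (m : ℕ) :
    MvPolynomial (Fin m) (ZMod 2) →ₗ[ZMod 2] ((Fin m → ZMod 2) → ZMod 2) where
  toFun f := fun v => MvPolynomial.eval v f
  map_add' f g := by funext v; simp
  map_smul' c f := by funext v; simp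

lemma ev_monomial {m : ℕ} (s : Fin m →₀ ℕ) (v : Fin m → ZMod 2) :
    MvPolynomial.eval v (monomial s (1 : ZMod 2)) = ∏ i ∈ s.support, v i := by
  rw [eval_monomial, one_mul, Finsupp.prod]
  exact Finset.prod_congr rfl fun i hi => zmod2_pow _ (Finsupp.mem_support_iff.mp hi)

noncomputable def bFam (r m : ℕ) : {s : Finset (Fin m) // s.card ≤ r} → ((Fin m → ZMod 2) → ZMod 2) :=
  fun s => fun v => ∏ i ∈ s.1, v i

lemma prodIndicator {m : ℕ} (s t : Finset (Fin m)) :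
    (∏ i ∈ s, (if i ∈ t then (1 : ZMod 2) else 0)) = if s ⊆ t then 1 else 0 := by
  by_cases h : s ⊆ t
  · rw [if_pos h]
    exact Finset.prod_eq_one fun i hi => if_pos (h hi)
  · rw [if_neg h]
    obtain ⟨i, hi, hit⟩ := Finset.not_subset.mp h
    exact Finset.prod_eq_zero hi (if_neg hit)

lemma bFam_indep (r m : ℕ) : LinearIndependent (ZMod 2) (bFam r m) := by
  rw [linearIndependent_iff']
  intro F g hsum t ht
  by_contra hgt
  -- consider the set of indices with nonzero coefficient
  classical
  set T : Finset {s : Finset (Fin m) // s.card ≤ r} := F.filter (fun s => g s ≠ 0) with hT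
  have hTne : T.Nonempty := ⟨t, Finset.mem_filter.mpr ⟨ht, hgt⟩⟩
  obtain ⟨u, huT, humin⟩ := T.exists_min_image (fun s => s.1.card) hTne
  have := congrFun hsum (fun i => if i ∈ u.1 then 1 else 0)
  simp only [Finset.sum_apply, Pi.smul_apply, Pi.zero_apply, bFam, smul_eq_mul] at this
  rw [show (∑ s ∈ F, g s * ∏ i ∈ s.1, (if i ∈ u.1 then (1:ZMod 2) else 0)) =
      ∑ s ∈ F, g s * (if s.1 ⊆ u.1 then 1 else 0) from
    Finset.sum_congr rfl fun s _ => by rw [prodIndicator]] at this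
  have hsum2 : ∑ s ∈ F, g s * (if s.1 ⊆ u.1 then (1:ZMod 2) else 0) = g u := by
    rw [Finset.sum_eq_single u]
    · simp
    · intro s hs hsu
      by_cases hg : g s = 0
      · simp [hg]
      · by_cases hsub : s.1 ⊆ u.1
        · exfalso
          have hcard := humin s (Finset.mem_filter.mpr ⟨hs, hg⟩)
          have : s.1 = u.1 := Finset.eq_of_subset_of_card_le hsub hcard
          exact hsu (Subtype.ext this)
        · simp [hsub]
    · intro h
      exact absurd (Finset.mem_filter.mp huT).1 h
  rw [hsum2] at this
  exact (Finset.mem_filter.mp huT).2 this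

lemma ev_monomial' {m : ℕ} (s : Fin m →₀ ℕ) (a : ZMod 2) (v : Fin m → ZMod 2) :
    MvPolynomial.eval v (monomial s a) = a * ∏ i ∈ s.support, v i := by
  rw [eval_monomial, Finsupp.prod]
  congr 1
  exact Finset.prod_congr rfl fun i hi => zmod2_pow _ (Finsupp.mem_support_iff.mp hi)

lemma map_eq_span (r m : ℕ) :
    (restrictTotalDegree (Fin m) (ZMod 2) r).map (evLin m) =
      Submodule.span (ZMod 2) (Set.range (bFam r m)) := by
  apply le_antisymm
  · rintro _ ⟨f, hf, rfl⟩
    rw [SetLike.mem_coe, mem_restrictTotalDegree] at hf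
    have key : ∀ s ∈ f.support, s.support.card ≤ r := by
      intro s hs
      calc s.support.card = ∑ i ∈ s.support, 1 := by simp
        _ ≤ ∑ i ∈ s.support, s i := Finset.sum_le_sum fun i hi =>
            Nat.one_le_iff_ne_zero.mpr (Finsupp.mem_support_iff.mp hi)
        _ ≤ r := le_trans (MvPolynomial.le_totalDegree hs) hf
    have : evLin m f = ∑ s ∈ f.support.attach, MvPolynomial.coeff s.1 f •
        bFam r m ⟨s.1.support, key s.1 s.2⟩ := by
      funext v
      simp only [evLin, LinearMap.coe_mk, AddHom.coe_mk, Finset.sum_apply, Pi.smul_apply,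
        bFam, smul_eq_mul]
      conv_lhs => rw [f.as_sum]
      rw [map_sum, ← Finset.sum_attach f.support (fun s => MvPolynomial.eval v (monomial s (MvPolynomial.coeff s f)))]
      exact Finset.sum_congr rfl fun s _ => ev_monomial' _ _ _
    rw [this]
    exact Submodule.sum_mem _ fun s hs =>
      Submodule.smul_mem _ _ (Submodule.subset_span (Set.mem_range_self _))
  · rw [Submodule.span_le]
    rintro _ ⟨s, rfl⟩
    have happ : ∀ j, (∑ i ∈ s.1, Finsupp.single i (1:ℕ)) j = if j ∈ s.1 then 1 else 0 := by
      intro j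
      rw [Finset.sum_apply']
      simp [Finsupp.single_apply, Finset.sum_ite_eq' s.1 j (fun _ => 1)]
    have hsupp : (∑ i ∈ s.1, Finsupp.single i (1:ℕ)).support = s.1 := by
      ext j
      rw [Finsupp.mem_support_iff, happ]
      by_cases h : j ∈ s.1 <;> simp [h]
    refine ⟨monomial (∑ i ∈ s.1, Finsupp.single i 1) 1, ?_, ?_⟩
    · rw [SetLike.mem_coe, mem_restrictTotalDegree]
      refine le_trans (MvPolynomial.totalDegree_monomial_le _ _) ?_
      rw [Finsupp.sum, hsupp]
      calc (∑ j ∈ s.1, (∑ i ∈ s.1, Finsupp.single i (1:ℕ)) j)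
          = ∑ j ∈ s.1, 1 := Finset.sum_congr rfl fun j hj => by rw [happ, if_pos hj]
        _ = s.1.card := by simp
        _ ≤ r := s.2
    · funext v
      simp only [evLin, LinearMap.coe_mk, AddHom.coe_mk]
      rw [ev_monomial, hsupp]
      rfl

lemma card_index (r m : ℕ) :
    Fintype.card {s : Finset (Fin m) // s.card ≤ r} =
      ∑ i ∈ Finset.range (r + 1), Nat.choose m i := by
  classical
  rw [Fintype.card_subtype]
  have : (Finset.univ.filter fun s : Finset (Fin m) => s.card ≤ r) =
      (Finset.range (r + 1)).biUnion (fun i => Finset.powersetCard i Finset.univ) := by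
    ext s
    simp [Finset.mem_powersetCard, Nat.lt_succ_iff]
  rw [this, Finset.card_biUnion]
  · refine Finset.sum_congr rfl fun i _ => ?_
    rw [Finset.card_powersetCard, Finset.card_univ, Fintype.card_fin]
  · intro i _ j _ hij
    simp only [Finset.disjoint_left, Finset.mem_powersetCard]
    rintro s ⟨-, rfl⟩ ⟨-, h⟩
    exact hij h

/-- For `r ≤ m`, `RM r m` is a `ZMod 2`-linear subspace of dimension
`∑_{i=0}^{r} C(m, i)`. -/
theorem rm_is_subspace_with_dimension (r m : ℕ) (hrm : r ≤ m) :
    ∃ W : Submodule (ZMod 2) ((Fin m → ZMod 2) → ZMod 2),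
      (W : Set ((Fin m → ZMod 2) → ZMod 2)) = RM r m ∧
      Module.finrank (ZMod 2) W = ∑ i ∈ Finset.range (r + 1), Nat.choose m i := by
  refine ⟨Submodule.span (ZMod 2) (Set.range (bFam r m)), ?_, ?_⟩
  · rw [← map_eq_span]
    ext c
    simp only [Submodule.map_coe, Set.mem_image, SetLike.mem_coe, mem_restrictTotalDegree]
    constructor
    · rintro ⟨f, hf, rfl⟩
      exact ⟨f, hf, fun v => rfl⟩
    · rintro ⟨f, hf, h⟩
      exact ⟨f, hf, (funext fun v => (h v).symm)⟩
  · rw [finrank_span_eq_card (bFam_indep r m), card_index]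
end

section
/- Let f be a multivariate polynomial in m variables over ZMod 2 with total degree strictly less than m. Then the sum of the evaluations of f over all points of (ZMod 2)^m is zero: Σ_{v : Fin m → ZMod 2} eval v f = 0. Consequently, every codeword of the Reed–Muller code RM(r, m) with r < m has even Hamming weight. -/
lemma sum_monomial_eval (m : ℕ) (d : Fin m →₀ ℕ) (hd : ∃ i, d i = 0) :
    ∑ v : Fin m → ZMod 2, ∏ i, v i ^ d i = 0 := by
  rw [← Fintype.prod_sum fun i (x : ZMod 2) => x ^ d i]
  obtain ⟨i, hi⟩ := hd
  apply Finset.prod_eq_zero (Finset.mem_univ i)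
  simp [hi]
  decide

/-- A polynomial of total degree `< m` over `ZMod 2` sums to zero over all points of
`(ZMod 2)^m`; consequently every codeword of `RM r m` with `r < m` has even Hamming
weight. -/
theorem eval_sum_zero_and_even_weight (m : ℕ) :
    (∀ f : MvPolynomial (Fin m) (ZMod 2), f.totalDegree < m →
      ∑ v : Fin m → ZMod 2, MvPolynomial.eval v f = 0) ∧
    (∀ r : ℕ, r < m → ∀ c ∈ RM r m,
      Even (Nat.card {v : Fin m → ZMod 2 // c v = 1})) := by
  have key : ∀ f : MvPolynomial (Fin m) (ZMod 2), f.totalDegree < m →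
      ∑ v : Fin m → ZMod 2, MvPolynomial.eval v f = 0 := by
    intro f hf
    have heval : ∀ v : Fin m → ZMod 2,
        MvPolynomial.eval v f = ∑ d ∈ f.support, f.coeff d * ∏ i, v i ^ d i :=
      fun v => MvPolynomial.eval_eq' v f
    simp_rw [heval]
    rw [Finset.sum_comm]
    apply Finset.sum_eq_zero
    intro d hd
    rw [← Finset.mul_sum, sum_monomial_eval m d, mul_zero]
    by_contra h
    push_neg at h
    have hle : m ≤ d.sum fun _ e => e := by
      have hsupp : (Finset.univ : Finset (Fin m)) ⊆ d.support := fun i _ =>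
        Finsupp.mem_support_iff.mpr (h i)
      calc m = ∑ _i : Fin m, 1 := by simp
        _ ≤ ∑ i ∈ d.support, 1 := Finset.sum_le_sum_of_subset hsupp
        _ ≤ ∑ i ∈ d.support, d i :=
            Finset.sum_le_sum fun i hi => Nat.one_le_iff_ne_zero.mpr
              (Finsupp.mem_support_iff.mp hi)
        _ = d.sum fun _ e => e := rfl
    have := MvPolynomial.le_totalDegree hd
    omega
  refine ⟨key, ?_⟩
  intro r hr c hc
  obtain ⟨f, hfr, hcf⟩ := hc
  have hsum : ∑ v : Fin m → ZMod 2, c v = 0 := by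
    simp_rw [hcf]; exact key f (lt_of_le_of_lt hfr hr)
  have hcard : ((Finset.univ.filter fun v : Fin m → ZMod 2 => c v = 1).card : ZMod 2) = 0 := by
    have : ((Finset.univ.filter fun v : Fin m → ZMod 2 => c v = 1).card : ZMod 2)
        = ∑ v : Fin m → ZMod 2, c v := by
      rw [← Finset.sum_boole]
      refine Finset.sum_congr rfl fun v _ => ?_
      have h01 : ∀ x : ZMod 2, x = 0 ∨ x = 1 := by decide
      rcases h01 (c v) with h | h <;> simp [h]
    rw [this, hsum]
  have h2 : (2 : ℕ) ∣ (Finset.univ.filter fun v : Fin m → ZMod 2 => c v = 1).card :=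
    (ZMod.natCast_eq_zero_iff _ 2).mp hcard
  rw [Nat.card_eq_fintype_card, Fintype.card_subtype]
  exact even_iff_two_dvd.mpr h2
end
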